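/- arXiv:2511.01114 — 3 statements merged into one kernel-verified Lean document; each statement's English description precedes it below -/
import Mathlib

section
/- Define $q_n(X;t)$ by the generating function $\prod_{x \in X} \frac{1-txz}{1-xz} = \sum_{n \geq 0} q_n(X;t) z^n$. Then for all $n \geq 1$, $q_n = \sum_{|\lambda|=n} (1-t)^{\ell(\lambda)} m_\lambda$, where the sum ranges over partitions $\lambda$ of $n$, $\ell(\lambda)$ is the number of nonzero parts of $\lambda$, and $m_\lambda$ is the monomial symmetric function. -/
/-!
Since `(1 - t x z) / (1 - x z) = 1 + (1 - t) Σ_{k ≥ 1} xᵏ zᵏ`, expanding the product shows that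
the coefficient of `zⁿ` is `Σ (1 - t)^{#supp l} x^l` over exponent vectors `l` of total degree `n`.
Grouping these by the partition formed by the nonzero entries of `l` gives the monomial symmetric
polynomials, and `#supp l` is the length of that partition.
-/

noncomputable section

open scoped Classical

/-- The generating function `∏_{i} (1 - t xᵢ z)(1 - xᵢ z)⁻¹ = Σₙ qₙ zⁿ`
over symmetric polynomials in the variables `x₁, …, x_N`. -/
def alphaGF (R : Type*) [CommRing R] (t : R) (N : ℕ) :
    PowerSeries (MvPolynomial (Fin N) R) :=
  ∏ i : Fin N,
    ((1 - PowerSeries.C (MvPolynomial.C t * MvPolynomial.X i) * PowerSeries.X) *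
      Ring.inverse (1 - PowerSeries.C (MvPolynomial.X i) * PowerSeries.X))

namespace PowerSeries

variable {A : Type*} [CommRing A]

theorem one_sub_C_mul_X_mul_mk_pow (a : A) :
    (1 - C a * X) * mk (a ^ ·) = 1 := by
  ext (_ | n)
  · simp
  · rw [sub_mul, one_mul, map_sub, mul_assoc, coeff_C_mul, coeff_succ_X_mul]
    simp [pow_succ']

theorem inverse_one_sub_C_mul_X (a : A) :
    Ring.inverse (1 - C a * X) = mk (a ^ ·) := by
  have h := one_sub_C_mul_X_mul_mk_pow a
  rw [← mul_one (Ring.inverse _), Ring.inverse_mul_eq_iff_eq_mul _ _ _ (.of_mul_eq_one _ h), h]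

theorem one_sub_C_mul_mul_X_mul_inverse (s a : A) :
    (1 - C (s * a) * X) * Ring.inverse (1 - C a * X) =
      mk fun k => if k = 0 then 1 else (1 - s) * a ^ k := by
  rw [inverse_one_sub_C_mul_X]
  ext (_ | n)
  · simp
  · simp only [sub_mul, one_mul, mul_assoc, map_sub, coeff_mk, coeff_C_mul, coeff_succ_X_mul,
      Nat.succ_ne_zero, if_false, pow_succ']

end PowerSeries

open PowerSeries

namespace MvPolynomial

variable {σ R : Type*} [CommSemiring R]

theorem prod_ite_eq_C_pow_card_support_mul_monomial [Fintype σ] (c : R) (l : σ →₀ ℕ) :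
    ∏ i, (if l i = 0 then 1 else C c * X i ^ l i) =
      (C (c ^ l.support.card) * monomial l 1 : MvPolynomial σ R) := by
  rw [← Finset.prod_subset l.support.subset_univ fun i _ hi => by simp_all,
    Finset.prod_congr rfl fun i hi => if_neg (Finsupp.mem_support_iff.mp hi),
    Finset.prod_mul_distrib, Finset.prod_const, ← map_pow, monic_monomial_eq, Finsupp.prod]

theorem prod_map_X_eq_monomial [DecidableEq σ] (s : Multiset σ) :
    (s.map X).prod = (monomial (Multiset.toFinsupp s) 1 : MvPolynomial σ R) := by
  rw [Finset.prod_multiset_map_count, monic_monomial_eq, Finsupp.prod,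
    Multiset.toFinsupp_support]
  rfl

variable [DecidableEq σ] {n : ℕ}

theorem sum_partition_mul_msymm (f : n.Partition → MvPolynomial σ R) [Fintype σ] :
    ∑ P, f P * msymm σ R P = ∑ s : Sym σ n, f (.ofSym s) * ((s : Multiset σ).map X).prod := by
  simp only [msymm, Finset.mul_sum]
  rw [Finset.sum_sigma', Finset.univ_sigma_univ]
  refine Fintype.sum_equiv (Equiv.sigmaFiberEquiv fun s : Sym σ n => Nat.Partition.ofSym s) _ _ ?_
  rintro ⟨P, s, rfl⟩
  rfl

end MvPolynomial

theorem Nat.Partition.card_parts_ofSym {σ : Type*} [DecidableEq σ] {n : ℕ} (s : Sym σ n) :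
    Multiset.card (ofSym s).parts = (Multiset.toFinsupp (s : Multiset σ)).support.card := by
  rw [Multiset.toFinsupp_support, Multiset.card_toFinset]
  exact Multiset.card_map _ _

theorem Finset.sum_sym_eq_sum_finsuppAntidiag_univ {σ M : Type*} [Fintype σ] [DecidableEq σ]
    [AddCommMonoid M] (n : ℕ) (f : (σ →₀ ℕ) → M) :
    ∑ s : Sym σ n, f (Multiset.toFinsupp s) = ∑ l ∈ univ.finsuppAntidiag n, f l := by
  have mem_iff (l : σ →₀ ℕ) : l ∈ univ.finsuppAntidiag n ↔ Multiset.card l.toMultiset = n := by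
    rw [mem_finsuppAntidiag, Finsupp.card_toMultiset, Finsupp.sum_fintype _ _ fun _ => rfl]
    simp
  refine sum_bij' (fun s _ => Multiset.toFinsupp s) (fun l hl => ⟨l.toMultiset, (mem_iff l).1 hl⟩)
    (fun s _ => (mem_iff _).2 ?_) (fun _ _ => mem_univ _) (fun s _ => ?_)
    (fun l _ => Finsupp.toMultiset_toFinsupp l) fun _ _ => rfl
  · rw [Multiset.toFinsupp_toMultiset]
    exact s.2
  · exact Sym.coe_injective (Multiset.toFinsupp_toMultiset (s : Multiset σ))

theorem q_eq_sum_monomial_symmetric_general (R : Type*) [CommRing R] (t : R) (N n : ℕ) :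
    PowerSeries.coeff n (alphaGF R t N) =
      ∑ P : Nat.Partition n,
        MvPolynomial.C ((1 - t) ^ Multiset.card P.parts) * MvPolynomial.msymm (Fin N) R P := by
  have hfactor (i : Fin N) :
      (1 - C (MvPolynomial.C t * MvPolynomial.X i) * X) *
        Ring.inverse (1 - C (MvPolynomial.X i) * X) =
      mk fun k => if k = 0 then 1 else MvPolynomial.C (1 - t) * MvPolynomial.X i ^ k := by
    rw [one_sub_C_mul_mul_X_mul_inverse, map_sub, map_one]
  rw [alphaGF, Finset.prod_congr rfl fun i _ => hfactor i, coeff_prod]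
  simp only [coeff_mk, MvPolynomial.prod_ite_eq_C_pow_card_support_mul_monomial]
  rw [MvPolynomial.sum_partition_mul_msymm, ← Finset.sum_sym_eq_sum_finsuppAntidiag_univ]
  simp only [Nat.Partition.card_parts_ofSym, MvPolynomial.prod_map_X_eq_monomial]

/-- for `n ≥ 1`,
`qₙ = Σ_{|λ| = n} (1-t)^{ℓ(λ)} m_λ`, the sum over partitions `λ` of `n`. -/
theorem q_eq_sum_monomial_symmetric (R : Type*) [CommRing R] (t : R) (N n : ℕ) (hn : 1 ≤ n) :
    PowerSeries.coeff n (alphaGF R t N) =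
      ∑ P : Nat.Partition n,
        MvPolynomial.C ((1 - t) ^ Multiset.card P.parts) * MvPolynomial.msymm (Fin N) R P :=
  q_eq_sum_monomial_symmetric_general R t N n
end
end

section
/- Define $b_n(X;t)$ by the generating function $\prod_{x \in X} \frac{1+xz}{1+txz} = \sum_{n \geq 0} b_n(X;t) z^n$. Then for all $n \geq 1$, $b_n = \sum_{|\lambda|=n} (-t)^{n-\ell(\lambda)} (1-t)^{\ell(\lambda)} m_\lambda$, where the sum ranges over partitions $\lambda$ of $n$. -/
/-!
Expanding `(1 + x z)/(1 + t x z) = 1 + ∑_{k ≥ 1} (1 - t)(-t)^(k-1) x^k z^k`, the coefficient of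
`z^n` in the product over the variables is a sum, over exponent vectors of total degree `n`, of the
monomial times a weight that is multiplicative in the exponents. The weight only depends on the
partition formed by the nonzero exponents, so grouping the monomials by that partition gives
`∑_λ (∏_{p ∈ λ} c_p) m_λ` with `c_p` the coefficient of `z^p` in `(1 + z)/(1 + t z)`, and
`∏_{p ∈ λ} (1 - t)(-t)^(p-1) = (1 - t)^ℓ(λ) (-t)^(n - ℓ(λ))`.
-/

noncomputable section

open scoped Classical

/-- The generating function `∏_{i} (1 + xᵢ z)(1 + t xᵢ z)⁻¹ = Σₙ bₙ zⁿ`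
over symmetric polynomials in the variables `x₁, …, x_N`. -/
def betaGF (R : Type*) [CommRing R] (t : R) (N : ℕ) :
    PowerSeries (MvPolynomial (Fin N) R) :=
  ∏ i : Fin N,
    ((1 + PowerSeries.C (MvPolynomial.X i) * PowerSeries.X) *
      Ring.inverse (1 + PowerSeries.C (MvPolynomial.C t * MvPolynomial.X i) * PowerSeries.X))

namespace PowerSeries

variable {A : Type*} [CommRing A]

theorem inverse_one_add_C_mul_X (a : A) :
    Ring.inverse (1 + C a * X) = mk fun k => (-a) ^ k := by
  have h : (1 + C a * X) * (mk fun k => (-a) ^ k) = 1 := by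
    ext (_ | k)
    · simp
    · simp only [add_mul, one_mul, map_add, mul_assoc, coeff_C_mul, coeff_succ_X_mul, coeff_mk,
        coeff_one, Nat.succ_ne_zero, if_false]
      ring
  simpa [h] using Ring.inverse_mul_cancel_left _ (mk fun k => (-a) ^ k) (IsUnit.of_mul_eq_one _ h)

theorem coeff_succ_one_add_C_mul_X_mul_inverse (a b : A) (k : ℕ) :
    coeff (k + 1) ((1 + C a * X) * Ring.inverse (1 + C b * X)) = (a - b) * (-b) ^ k := by
  simp only [inverse_one_add_C_mul_X, add_mul, one_mul, map_add, mul_assoc, coeff_C_mul,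
    coeff_succ_X_mul, coeff_mk]
  ring

end PowerSeries

theorem Finset.sum_finsuppAntidiag_univ_eq_sum_sym {σ M : Type*} [Fintype σ] [DecidableEq σ]
    [AddCommMonoid M] (n : ℕ) (F : (σ →₀ ℕ) → M) :
    ∑ l ∈ finsuppAntidiag univ n, F l = ∑ a : Sym σ n, F (Multiset.toFinsupp a) := by
  symm
  refine Finset.sum_bij (fun a _ => Multiset.toFinsupp a) (fun a _ => ?_)
    (fun a _ b _ h => Sym.coe_injective (Multiset.toFinsupp.injective h)) (fun l hl => ?_)
    (fun _ _ => rfl)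
  · refine mem_finsuppAntidiag.mpr ⟨?_, subset_univ _⟩
    exact (sum_congr rfl fun i _ => Multiset.toFinsupp_apply _ i).trans
      ((Multiset.sum_count_eq_card fun _ _ => mem_univ _).trans a.2)
  · have hl : (Finsupp.toMultiset l).card = n := by
      simpa [Finsupp.sum_fintype] using (mem_finsuppAntidiag.mp hl).1
    exact ⟨⟨_, hl⟩, mem_univ _, Finsupp.toMultiset_toFinsupp l⟩

theorem Multiset.prod_map_eq_prod_pow_count {σ M : Type*} [Fintype σ] [DecidableEq σ]
    [CommMonoid M] (s : Multiset σ) (f : σ → M) : (s.map f).prod = ∏ i, f i ^ s.count i := by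
  rw [Finset.prod_multiset_map_count]
  exact Finset.prod_subset (Finset.subset_univ _) fun i _ hi => by
    simp [Multiset.count_eq_zero.mpr (by simpa using hi)]

theorem Nat.Partition.prod_map_parts_ofSym {σ M : Type*} [Fintype σ] [DecidableEq σ]
    [CommMonoid M] {n : ℕ} (a : Sym σ n) (c : ℕ → M) (hc : c 0 = 1) :
    ((ofSym a).parts.map c).prod = ∏ i, c ((a : Multiset σ).count i) := by
  rw [← Finset.prod_subset (Finset.subset_univ (a : Multiset σ).toFinset) fun i _ hi => ?_,
    Finset.prod_eq_multiset_prod]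
  · simp [ofSym]
  · rw [Multiset.count_eq_zero.mpr (by simpa using hi), hc]

namespace MvPolynomial

variable {σ R : Type*} [CommSemiring R] [Fintype σ] [DecidableEq σ]

theorem sum_C_mul_msymm {n : ℕ} (f : n.Partition → R) :
    ∑ μ, C (f μ) * msymm σ R μ =
      ∑ a : Sym σ n, C (f (.ofSym a)) * ((a : Multiset σ).map X).prod := by
  rw [← Finset.sum_fiberwise Finset.univ fun a : Sym σ n => Nat.Partition.ofSym a]
  refine Finset.sum_congr rfl fun μ _ => ?_
  rw [msymm, Finset.mul_sum,
    Finset.sum_subtype (p := fun a : Sym σ n => Nat.Partition.ofSym a = μ) _ (fun a => by simp)]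
  exact Finset.sum_congr rfl fun a _ => by rw [a.2]; rfl

theorem coeff_prod_mk_C_mul_X_pow (c : ℕ → R) (hc : c 0 = 1) (n : ℕ) :
    PowerSeries.coeff n (∏ i : σ, PowerSeries.mk fun k => C (c k) * X i ^ k) =
      ∑ μ : n.Partition, C ((μ.parts.map c).prod) * msymm σ R μ := by
  simp only [sum_C_mul_msymm, PowerSeries.coeff_prod, PowerSeries.coeff_mk,
    Finset.sum_finsuppAntidiag_univ_eq_sum_sym, Multiset.toFinsupp_apply,
    Nat.Partition.prod_map_parts_ofSym _ c hc, Multiset.prod_map_eq_prod_pow_count,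
    Finset.prod_mul_distrib, map_prod]

end MvPolynomial

theorem Multiset.prod_map_pow_eq_pow_sum {ι M : Type*} [CommMonoid M] (s : Multiset ι)
    (f : ι → ℕ) (b : M) : (s.map fun i => b ^ f i).prod = b ^ (s.map f).sum := by
  induction s using Multiset.induction_on with
  | empty => simp
  | cons i s ih => simp [ih, pow_add]

theorem Nat.Partition.sum_map_parts_sub_one {n : ℕ} (μ : n.Partition) :
    (μ.parts.map (· - 1)).sum = n - Multiset.card μ.parts := by
  rw [Multiset.sum_map_tsub _ fun _ hp => μ.parts_pos hp, Multiset.map_id', μ.parts_sum,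
    Multiset.map_const', Multiset.sum_replicate, smul_eq_mul, mul_one]

section Beta

variable {R : Type*} [CommRing R]

def betaCoeff (t : R) : ℕ → R
  | 0 => 1
  | k + 1 => (1 - t) * (-t) ^ k

theorem one_add_C_mul_X_mul_inverse_eq_mk_betaCoeff {A : Type*} [CommRing A] [Algebra R A]
    (t : R) (x : A) :
    (1 + PowerSeries.C x * PowerSeries.X) *
        Ring.inverse (1 + PowerSeries.C (algebraMap R A t * x) * PowerSeries.X) =
      PowerSeries.mk fun k => algebraMap R A (betaCoeff t k) * x ^ k := by
  ext (_ | k)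
  · rw [PowerSeries.inverse_one_add_C_mul_X]
    simp [betaCoeff]
  · rw [PowerSeries.coeff_succ_one_add_C_mul_X_mul_inverse, PowerSeries.coeff_mk, betaCoeff]
    simp only [map_mul, map_sub, map_one, map_pow, map_neg]
    ring

theorem Nat.Partition.prod_map_betaCoeff_parts (t : R) {n : ℕ} (μ : n.Partition) :
    (μ.parts.map (betaCoeff t)).prod =
      (-t) ^ (n - Multiset.card μ.parts) * (1 - t) ^ Multiset.card μ.parts := by
  have h : ∀ p ∈ μ.parts, betaCoeff t p = (1 - t) * (-t) ^ (p - 1) := fun p hp => by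
    obtain ⟨k, rfl⟩ := Nat.exists_eq_add_of_lt (μ.parts_pos hp)
    rfl
  rw [Multiset.map_congr rfl h, Multiset.prod_map_mul, Multiset.map_const',
    Multiset.prod_replicate, Multiset.prod_map_pow_eq_pow_sum, sum_map_parts_sub_one, mul_comm]

end Beta

theorem b_eq_sum_monomial_symmetric_general (R : Type*) [CommRing R] (t : R) (N n : ℕ) :
    PowerSeries.coeff n (betaGF R t N) =
      ∑ P : Nat.Partition n,
        MvPolynomial.C ((-t) ^ (n - Multiset.card P.parts) * (1 - t) ^ Multiset.card P.parts) *
          MvPolynomial.msymm (Fin N) R P := by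
  have hfactor (i : Fin N) := one_add_C_mul_X_mul_inverse_eq_mk_betaCoeff t
    (MvPolynomial.X (R := R) i)
  simp only [MvPolynomial.algebraMap_eq] at hfactor
  simp only [betaGF, hfactor, MvPolynomial.coeff_prod_mk_C_mul_X_pow (betaCoeff t) rfl,
    Nat.Partition.prod_map_betaCoeff_parts]

/-- for `n ≥ 1`,
`bₙ = Σ_{|λ| = n} (-t)^{n-ℓ(λ)} (1-t)^{ℓ(λ)} m_λ`, the sum over partitions `λ` of `n`. -/
theorem b_eq_sum_monomial_symmetric (R : Type*) [CommRing R] (t : R) (N n : ℕ) (hn : 1 ≤ n) :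
    PowerSeries.coeff n (betaGF R t N) =
      ∑ P : Nat.Partition n,
        MvPolynomial.C ((-t) ^ (n - Multiset.card P.parts) * (1 - t) ^ Multiset.card P.parts) *
          MvPolynomial.msymm (Fin N) R P :=
  b_eq_sum_monomial_symmetric_general R t N n
end
end

section
/- With the inner product determined by $(q_\lambda, m_\mu) = \delta_{\lambda\mu}$, the adjoint of multiplication by $b_k$ acts on $q_n$ by: $b_k^\perp q_n = q_n$ if $k = 0$, and $b_k^\perp q_n = (-t)^{k-1}(1-t) q_{n-k}$ if $k > 0$ (interpreting $q_m = 0$ for $m < 0$). -/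
noncomputable section

open scoped Classical

/-- The monomial symmetric function `m_μ` in countably many variables, as a power series. -/
def mms (K : Type*) [CommRing K] (mu : Multiset ℕ) : MvPowerSeries ℕ K :=
  fun d => if Multiset.map (fun i => d i) d.support.val = mu then 1 else 0

/-- `qₙ(X;t) = Σ_{|λ|=n} (1-t)^{ℓ(λ)} m_λ` (the coefficient of `zⁿ` in `∏ₓ (1-txz)/(1-xz)`). -/
def qq (K : Type*) [CommRing K] (t : K) (n : ℕ) : MvPowerSeries ℕ K :=
  ∑ P : Nat.Partition n, ((1 - t) ^ Multiset.card P.parts) • mms K P.parts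

/-- `b_k(X;t) = Σ_{|λ|=k} (-t)^{k-ℓ(λ)} (1-t)^{ℓ(λ)} m_λ`. -/
def bb (K : Type*) [CommRing K] (t : K) (k : ℕ) : MvPowerSeries ℕ K :=
  ∑ P : Nat.Partition k,
    ((-t) ^ (k - Multiset.card P.parts) * (1 - t) ^ Multiset.card P.parts) • mms K P.parts

/-- `q_λ = q_{λ₁} q_{λ₂} ⋯` for a partition `λ` given as a multiset of positive parts. -/
def qprod (K : Type*) [CommRing K] (t : K) (lam : Multiset ℕ) : MvPowerSeries ℕ K :=
  (lam.map (qq K t)).prod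

/-- The ring `Λ(t)` of symmetric functions, realized as the span of the `m_λ`
over partitions `λ` (multisets of positive integers). -/
def mspan (K : Type*) [CommRing K] : Submodule K (MvPowerSeries ℕ K) :=
  Submodule.span K {F | ∃ mu : Multiset ℕ, (∀ x ∈ mu, 0 < x) ∧ F = mms K mu}

/-!
Since `(q_n, m_μ) = δ_{(n),μ}`, the functional `(q_n, ·)` on `Λ(t)` is the coefficient of `x₀ⁿ`.
That coefficient only sees the specialization `x₁ = x₂ = ⋯ = 0`, which sends `b_k` to
`(-t)^{k-1}(1-t) x₀ᵏ` (only the one-row partition `(k)` survives). Hence `(q_n, b_k H)` is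
`(-t)^{k-1}(1-t)` times the coefficient of `x₀^{n-k}` in `H`, that is `(-t)^{k-1}(1-t)(q_{n-k}, H)`.

The one technical point is that `b_k H` lies in `Λ(t)`: a product of monomial symmetric
functions is symmetric and homogeneous, and every such series is a finite combination of the
`m_λ`, because its coefficients depend only on the multiset of exponents.
-/

/-- `shape d` is the partition `λ` such that the monomial `x^d` occurs in `m_λ`. -/
def shape {σ : Type*} (d : σ →₀ ℕ) : Multiset ℕ := Multiset.map (fun i => d i) d.support.val

section Shape

variable {σ τ : Type*}

theorem pos_of_mem_shape {d : σ →₀ ℕ} {x : ℕ} (hx : x ∈ shape d) : 0 < x := by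
  obtain ⟨i, hi, rfl⟩ := Multiset.mem_map.1 hx
  exact Nat.pos_of_ne_zero (Finsupp.mem_support_iff.1 hi)

theorem sum_shape (d : σ →₀ ℕ) : (shape d).sum = d.degree := rfl

theorem shape_eq_zero_iff {d : σ →₀ ℕ} : shape d = 0 ↔ d = 0 := by
  rw [shape, Multiset.map_eq_zero, Finset.val_eq_zero, Finsupp.support_eq_empty]

theorem shape_embDomain (e : σ ↪ τ) (d : σ →₀ ℕ) : shape (d.embDomain e) = shape d := by
  simp [shape, Finsupp.support_embDomain, Finset.map_val, Multiset.map_map]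

theorem shape_single (i : σ) (n : ℕ) :
    shape (Finsupp.single i n) = (Nat.Partition.indiscrete n).parts := by
  rcases eq_or_ne n 0 with rfl | hn
  · simp [shape_eq_zero_iff]
  · simp [shape, hn]

theorem mk_fiber_eq_of_shape_eq [Countable σ] [Infinite σ] {d d' : σ →₀ ℕ}
    (h : shape d = shape d') (v : ℕ) :
    Cardinal.mk {i // d i = v} = Cardinal.mk {i // d' i = v} := by
  rcases eq_or_ne v 0 with rfl | hv
  · have mk_zeros (f : σ →₀ ℕ) : Cardinal.mk {i // f i = 0} = Cardinal.aleph0 := by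
      have hzeros : {i | f i = 0}.Infinite := by
        simpa [Set.compl_def] using f.support.finite_toSet.infinite_compl
      have : Infinite {i // f i = 0} := hzeros.to_subtype
      exact Cardinal.mk_eq_aleph0 _
    rw [mk_zeros, mk_zeros]
  · have mk_fiber (f : σ →₀ ℕ) : Cardinal.mk {i // f i = v} = (shape f).count v := by
      rw [shape, Multiset.count_map, ← Finset.filter_val, Finset.card_val, ← Cardinal.mk_coe_finset]
      refine Cardinal.mk_congr (Equiv.subtypeEquivRight fun i => ?_)
      simp only [Finset.mem_filter, Finsupp.mem_support_iff]
      constructor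
      · rintro rfl; exact ⟨hv, rfl⟩
      · rintro ⟨-, rfl⟩; rfl
    rw [mk_fiber, mk_fiber, h]

theorem exists_perm_of_shape_eq [Countable σ] [Infinite σ] {d d' : σ →₀ ℕ}
    (h : shape d = shape d') : ∃ e : Equiv.Perm σ, d.embDomain e.toEmbedding = d' := by
  let fiberEquiv (v : ℕ) : {i // d i = v} ≃ {i // d' i = v} :=
    (Cardinal.eq.1 (mk_fiber_eq_of_shape_eq h v)).some
  let e : Equiv.Perm σ := (Equiv.sigmaFiberEquiv d).symm.trans
    ((Equiv.sigmaCongrRight fiberEquiv).trans (Equiv.sigmaFiberEquiv d'))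
  refine ⟨e, Finsupp.ext fun j => ?_⟩
  obtain ⟨i, rfl⟩ := e.surjective j
  exact (Finsupp.embDomain_apply_self e.toEmbedding d i).trans (fiberEquiv (d i) ⟨i, rfl⟩).2.symm

end Shape

namespace MvPowerSeries

variable {σ R : Type*} [CommSemiring R]

def IsSymmetric (F : MvPowerSeries σ R) : Prop :=
  ∀ e : Equiv.Perm σ, renameEquiv R e F = F

theorem IsSymmetric.mul {F G : MvPowerSeries σ R} (hF : F.IsSymmetric) (hG : G.IsSymmetric) :
    (F * G).IsSymmetric := fun e => by
  rw [map_mul, hF e, hG e]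

theorem IsSymmetric.coeff_embDomain {F : MvPowerSeries σ R} (hF : F.IsSymmetric)
    (e : Equiv.Perm σ) (d : σ →₀ ℕ) : coeff (d.embDomain e.toEmbedding) F = coeff d F := by
  conv_lhs => rw [← hF e]
  exact coeff_embDomain_rename e.toEmbedding F d

theorem isSymmetric_of_coeff_embDomain {F : MvPowerSeries σ R}
    (h : ∀ (e : Equiv.Perm σ) (d : σ →₀ ℕ), coeff (d.embDomain e.toEmbedding) F = coeff d F) :
    F.IsSymmetric := fun e => by
  ext d
  obtain ⟨d, rfl⟩ : ∃ d', d'.embDomain e.toEmbedding = d :=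
    ⟨d.embDomain e.symm.toEmbedding, by
      rw [Finsupp.embDomain_eq_mapDomain, Finsupp.embDomain_eq_mapDomain, ← Finsupp.mapDomain_comp]
      simp⟩
  rw [h]
  exact coeff_embDomain_rename e.toEmbedding F d

theorem IsSymmetric.coeff_eq_of_shape_eq [Countable σ] [Infinite σ] {F : MvPowerSeries σ R}
    (hF : F.IsSymmetric) {d d' : σ →₀ ℕ} (h : shape d = shape d') : coeff d F = coeff d' F := by
  obtain ⟨e, rfl⟩ := exists_perm_of_shape_eq h
  exact (hF.coeff_embDomain e d).symm

end MvPowerSeries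

open MvPowerSeries

section SymmetricFunctions

variable (K : Type*) [CommRing K]

theorem coeff_mms (mu : Multiset ℕ) (d : ℕ →₀ ℕ) :
    coeff d (mms K mu) = if shape d = mu then 1 else 0 := rfl

theorem mms_zero : mms K 0 = 1 := by
  ext d
  simp only [coeff_mms, coeff_one, shape_eq_zero_iff]

theorem isSymmetric_mms (mu : Multiset ℕ) : (mms K mu).IsSymmetric :=
  isSymmetric_of_coeff_embDomain fun e d => by simp only [coeff_mms, shape_embDomain]

theorem isWeightedHomogeneous_mms (mu : Multiset ℕ) :
    (mms K mu).IsWeightedHomogeneous (fun _ => 1) mu.sum := by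
  intro d hd
  obtain rfl : shape d = mu := by
    by_contra h
    exact hd (if_neg h)
  rw [sum_shape, Finsupp.degree_eq_weight_one]

theorem coeff_sum_smul_mms (N : ℕ) (c : Multiset ℕ → K) (d : ℕ →₀ ℕ) :
    coeff d (∑ P : N.Partition, c P.parts • mms K P.parts) =
      if d.degree = N then c (shape d) else 0 := by
  simp only [map_sum, map_smul, coeff_mms, smul_eq_mul, mul_ite, mul_one, mul_zero]
  split_ifs with hd
  · let P₀ : N.Partition := ⟨shape d, pos_of_mem_shape, by rw [sum_shape, hd]⟩
    rw [Fintype.sum_eq_single P₀ fun P hP => if_neg fun h => hP (Nat.Partition.ext h.symm)]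
    exact if_pos rfl
  · refine Finset.sum_eq_zero fun P _ => if_neg fun h => hd ?_
    rw [← sum_shape, h, P.parts_sum]

theorem sum_smul_mms_mem_mspan (N : ℕ) (c : Multiset ℕ → K) :
    ∑ P : N.Partition, c P.parts • mms K P.parts ∈ mspan K :=
  Submodule.sum_mem _ fun P _ =>
    Submodule.smul_mem _ _ (Submodule.subset_span ⟨P.parts, fun _ => P.parts_pos, rfl⟩)

theorem mem_mspan_of_isSymmetric {F : MvPowerSeries ℕ K} {N : ℕ} (hs : F.IsSymmetric)
    (hh : F.IsWeightedHomogeneous (fun _ => 1) N) : F ∈ mspan K := by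
  -- the coefficient of any monomial of shape `mu`; by symmetry it does not matter which
  let c (mu : Multiset ℕ) : K := if h : ∃ d : ℕ →₀ ℕ, shape d = mu then coeff h.choose F else 0
  convert sum_smul_mms_mem_mspan K N c
  ext d
  rw [coeff_sum_smul_mms]
  split_ifs with hd
  · have h : ∃ d', shape d' = shape d := ⟨d, rfl⟩
    simp only [c, dif_pos h]
    exact hs.coeff_eq_of_shape_eq h.choose_spec.symm
  · exact hh.coeff_eq_zero (by rwa [← Finsupp.degree_eq_weight_one])

theorem mms_mul_mms_mem_mspan (lam mu : Multiset ℕ) : mms K lam * mms K mu ∈ mspan K :=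
  mem_mspan_of_isSymmetric K ((isSymmetric_mms K lam).mul (isSymmetric_mms K mu))
    (IsWeightedHomogeneous.mul (isWeightedHomogeneous_mms K lam) (isWeightedHomogeneous_mms K mu))

theorem mul_mem_mspan {F G : MvPowerSeries ℕ K} (hF : F ∈ mspan K) (hG : G ∈ mspan K) :
    F * G ∈ mspan K := by
  have hmul : mspan K * mspan K ≤ mspan K := by
    rw [mspan, Submodule.span_mul_span, Submodule.span_le]
    rintro _ ⟨_, ⟨lam, -, rfl⟩, _, ⟨mu, -, rfl⟩, rfl⟩
    exact mms_mul_mms_mem_mspan K lam mu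
  exact hmul (Submodule.mul_mem_mul hF hG)

/-- The specialization `x₁ = x₂ = ⋯ = 0`, keeping only the variable `x₀`. -/
def restrictX0 : MvPowerSeries ℕ K →ₐ[K] PowerSeries K :=
  killCompl (Function.Embedding.punit 0)

theorem coeff_restrictX0 (n : ℕ) (F : MvPowerSeries ℕ K) :
    PowerSeries.coeff n (restrictX0 K F) = coeff (Finsupp.single 0 n) F := by
  rw [PowerSeries.coeff_def Finsupp.single_eq_same, restrictX0, coeff_killCompl,
    Finsupp.embDomain_single]
  rfl

variable {K} (t : K)

theorem bb_zero : bb K t 0 = 1 := by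
  rw [bb, Fintype.sum_unique, Nat.Partition.partition_zero_parts]
  simp [mms_zero]

theorem bb_mem_mspan (k : ℕ) : bb K t k ∈ mspan K :=
  sum_smul_mms_mem_mspan K k fun mu => (-t) ^ (k - Multiset.card mu) * (1 - t) ^ Multiset.card mu

theorem restrictX0_bb {k : ℕ} (hk : k ≠ 0) :
    restrictX0 K (bb K t k) = PowerSeries.C ((-t) ^ (k - 1) * (1 - t)) * PowerSeries.X ^ k := by
  ext n
  rw [coeff_restrictX0, bb, coeff_sum_smul_mms K k
    (fun mu => (-t) ^ (k - Multiset.card mu) * (1 - t) ^ Multiset.card mu),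
    Finsupp.degree_single, shape_single, PowerSeries.coeff_C_mul_X_pow]
  split_ifs with h
  · subst h
    simp [Nat.Partition.indiscrete_parts hk]
  · rfl

theorem qprod_indiscrete (n : ℕ) : qprod K t (Nat.Partition.indiscrete n).parts = qq K t n := by
  rcases eq_or_ne n 0 with rfl | hn
  · simp [qprod, qq, mms_zero]
  · simp [qprod, hn]

theorem pairing_qq_eq_coeff {B : MvPowerSeries ℕ K →ₗ[K] MvPowerSeries ℕ K →ₗ[K] K}
    (hB : ∀ lam mu : Multiset ℕ, (∀ x ∈ lam, 0 < x) → (∀ x ∈ mu, 0 < x) →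
      B (qprod K t lam) (mms K mu) = if lam = mu then 1 else 0)
    (n : ℕ) {G : MvPowerSeries ℕ K} (hG : G ∈ mspan K) :
    B (qq K t n) G = coeff (Finsupp.single 0 n) G := by
  refine LinearMap.eqOn_span (f := B (qq K t n)) (g := coeff (Finsupp.single 0 n)) ?_ hG
  rintro _ ⟨mu, hmu, rfl⟩
  rw [← qprod_indiscrete, hB _ _ (fun _ => Nat.Partition.parts_pos _) hmu, coeff_mms, shape_single]

end SymmetricFunctions

/-- with the inner product `B` determined by `(q_λ, m_μ) = δ_{λμ}`, the adjoint
of multiplication by `b_k` satisfies `b_k^⊥ qₙ = qₙ` if `k = 0` and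
`b_k^⊥ qₙ = (-t)^{k-1}(1-t) q_{n-k}` if `k > 0` (with `q_m = 0` for `m < 0`);
i.e. `(qₙ, b_k H) = (-t)^{k-1}(1-t)(q_{n-k}, H)` for all symmetric functions `H`. -/
theorem b_perp_q (K : Type*) [Field K] (t : K)
    (B : MvPowerSeries ℕ K →ₗ[K] MvPowerSeries ℕ K →ₗ[K] K)
    (hB : ∀ lam mu : Multiset ℕ, (∀ x ∈ lam, 0 < x) → (∀ x ∈ mu, 0 < x) →
      B (qprod K t lam) (mms K mu) = if lam = mu then 1 else 0)
    (n k : ℕ) (H : MvPowerSeries ℕ K) (hH : H ∈ mspan K) :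
    B (qq K t n) (bb K t k * H) =
      if k = 0 then B (qq K t n) H
      else if k ≤ n then (-t) ^ (k - 1) * (1 - t) * B (qq K t (n - k)) H
      else 0 := by
  rcases eq_or_ne k 0 with rfl | hk
  · rw [bb_zero, one_mul, if_pos rfl]
  have hbH : bb K t k * H ∈ mspan K := mul_mem_mspan K (bb_mem_mspan t k) hH
  rw [if_neg hk, pairing_qq_eq_coeff t hB n hbH, ← coeff_restrictX0, map_mul, restrictX0_bb t hk,
    mul_assoc, PowerSeries.coeff_C_mul, PowerSeries.coeff_X_pow_mul']
  split_ifs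
  · rw [coeff_restrictX0, pairing_qq_eq_coeff t hB (n - k) hH]
  · rw [mul_zero]
end
end
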